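/- Let a, b ∈ ℝ with a ≤ b, let h(z) = erf((z − a)/√2) − erf((z − b)/√2), let m = (a + b)/2, and let ž ≤ ẑ be reals. Let z∗ be the endpoint of [ž, ẑ] farther from m, i.e., z∗ = ž if |ž − m| ≥ |ẑ − m| and z∗ = ẑ otherwise. Then h(z∗) ≤ h(z) for every z ∈ [ž, ẑ]. -/

import Mathlib

/-!
`h` is even about `m` because `erf` is odd, and for `z ≥ m` its derivative is a positive
multiple of `exp (-(z - a)² / 2) - exp (-(z - b)² / 2) ≤ 0`, as `z` is at least as far from `a`
as from `b`. Hence `h z` decreases with `|z - m|`, and on `[ž, ẑ]` the distance `|z - m|` is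
largest at an endpoint.
-/

/-- The Gauss error function `erf x = (2/√π) ∫₀ˣ exp (−t²) dt`. -/
noncomputable def erf (x : ℝ) : ℝ :=
  (2 / Real.sqrt Real.pi) * ∫ t in (0:ℝ)..x, Real.exp (-t ^ 2)

open Real Set

/-- The function `h` of the statement. -/
noncomputable def erfDiff (a b z : ℝ) : ℝ :=
  erf ((z - a) / √2) - erf ((z - b) / √2)

theorem erf_hasDerivAt (x : ℝ) : HasDerivAt erf (2 / √π * exp (-x ^ 2)) x := by
  have hint : Continuous fun t : ℝ => exp (-t ^ 2) := by fun_prop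
  exact ((hint.integral_hasStrictDerivAt 0 x).hasDerivAt).const_mul _

theorem erf_neg (x : ℝ) : erf (-x) = -erf x := by
  have hcomp := intervalIntegral.integral_comp_neg (a := 0) (b := x) fun t : ℝ => exp (-t ^ 2)
  simp only [neg_zero, neg_sq] at hcomp
  rw [erf, erf, intervalIntegral.integral_symm, ← hcomp]
  ring

theorem erfDiff_reflect (a b z : ℝ) : erfDiff a b (a + b - z) = erfDiff a b z := by
  have hza : (a + b - z - a) / √2 = -((z - b) / √2) := by ring
  have hzb : (a + b - z - b) / √2 = -((z - a) / √2) := by ring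
  rw [erfDiff, erfDiff, hza, hzb, erf_neg, erf_neg]
  ring

theorem erfDiff_hasDerivAt (a b z : ℝ) :
    HasDerivAt (erfDiff a b)
      (2 / √π / √2 * (exp (-((z - a) / √2) ^ 2) - exp (-((z - b) / √2) ^ 2))) z := by
  have hshift (c : ℝ) : HasDerivAt (fun w : ℝ => (w - c) / √2) (1 / √2) z := by
    simpa using ((hasDerivAt_id z).sub_const c).div_const √2
  exact (((erf_hasDerivAt _).comp z (hshift a)).sub
    ((erf_hasDerivAt _).comp z (hshift b))).congr_deriv (by ring)

theorem erfDiff_antitoneOn {a b : ℝ} (hab : a ≤ b) :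
    AntitoneOn (erfDiff a b) (Ici ((a + b) / 2)) := by
  refine antitoneOn_of_hasDerivWithinAt_nonpos (convex_Ici _)
    (fun z _ => (erfDiff_hasDerivAt a b z).continuousAt.continuousWithinAt)
    (fun z _ => (erfDiff_hasDerivAt a b z).hasDerivWithinAt) fun z hz => ?_
  rw [interior_Ici, mem_Ioi] at hz
  have hcloser : (z - b) ^ 2 ≤ (z - a) ^ 2 := by nlinarith
  have hexp : exp (-((z - a) / √2) ^ 2) ≤ exp (-((z - b) / √2) ^ 2) := by
    rw [div_pow, div_pow]
    gcongr
  exact mul_nonpos_of_nonneg_of_nonpos (by positivity) (sub_nonpos.2 hexp)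

theorem AntitoneOn.le_of_abs_sub_le_abs_sub {f : ℝ → ℝ} {m z w : ℝ}
    (hf : AntitoneOn f (Ici m)) (hsymm : ∀ x, f (2 * m - x) = f x) (hzw : |z - m| ≤ |w - m|) : f w ≤ f z := by
  have hfold (x : ℝ) : f x = f (m + |x - m|) := by
    rcases le_total m x with hx | hx
    · rw [abs_of_nonneg (sub_nonneg.2 hx), add_sub_cancel]
    · rw [abs_of_nonpos (sub_nonpos.2 hx), ← hsymm x]
      congr 1
      ring
  rw [hfold z, hfold w]
  exact hf (mem_Ici.2 (le_add_of_nonneg_right (abs_nonneg _)))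
    (mem_Ici.2 (le_add_of_nonneg_right (abs_nonneg _))) (by linarith)

theorem erf_diff_min_at_farther_endpoint_general
    (a b : ℝ) (hab : a ≤ b) (zlo zhi : ℝ)
    (zstar : ℝ)
    (hstar : zstar =
      if |zhi - (a + b) / 2| ≤ |zlo - (a + b) / 2| then zlo else zhi) :
    ∀ z ∈ Set.Icc zlo zhi,
      erf ((zstar - a) / Real.sqrt 2) - erf ((zstar - b) / Real.sqrt 2) ≤
        erf ((z - a) / Real.sqrt 2) - erf ((z - b) / Real.sqrt 2) := by
  intro z hz
  have hfarther : |z - (a + b) / 2| ≤ |zstar - (a + b) / 2| :=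
    calc |z - (a + b) / 2| ≤ max |zlo - (a + b) / 2| |zhi - (a + b) / 2| :=
          abs_le_max_abs_abs (sub_le_sub_right hz.1 _) (sub_le_sub_right hz.2 _)
      _ = |zstar - (a + b) / 2| := by
          rw [hstar]
          split_ifs with hlo
          · exact max_eq_left hlo
          · exact max_eq_right (not_le.1 hlo).le
  refine (erfDiff_antitoneOn hab).le_of_abs_sub_le_abs_sub (fun x => ?_) hfarther
  rw [show 2 * ((a + b) / 2) - x = a + b - x by ring, erfDiff_reflect]

/-- the minimum of `h z = erf((z−a)/√2) − erf((z−b)/√2)` over an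
interval `[ž, ẑ]` of candidate means is attained at the endpoint of `[ž, ẑ]` farther
from the midpoint `m = (a+b)/2`. -/
theorem erf_diff_min_at_farther_endpoint
    (a b : ℝ) (hab : a ≤ b) (zlo zhi : ℝ) (hz : zlo ≤ zhi)
    (zstar : ℝ)
    (hstar : zstar =
      if |zhi - (a + b) / 2| ≤ |zlo - (a + b) / 2| then zlo else zhi) :
    ∀ z ∈ Set.Icc zlo zhi,
      erf ((zstar - a) / Real.sqrt 2) - erf ((zstar - b) / Real.sqrt 2) ≤
        erf ((z - a) / Real.sqrt 2) - erf ((z - b) / Real.sqrt 2) :=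
  erf_diff_min_at_farther_endpoint_general a b hab zlo zhi zstar hstar
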